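/- arXiv:2406.12697 — 8 statements merged into one kernel-verified Lean document; each statement's English description precedes it below -/
import Mathlib

section
/- Let X be a compact metrizable space and N a closed subset of the space of Borel probability measures on X with the weak* topology. Then the following are equivalent: (1) X has a basis of open sets U with μ(∂U) = 0 for all μ ∈ N; (2) for any two disjoint closed subsets A₁, A₂ of X there is an open set U with A₁ ⊆ U, A₂ ∩ closure(U) = ∅, and μ(∂U) = 0 for all μ ∈ N; (3) for any two distinct points x, y ∈ X there is an open set U with x ∈ U, y ∉ closure(U), and μ(∂U) = 0 for all μ ∈ N. -/
open MeasureTheory Topology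

private lemma frontier_null_biInter {X : Type*} [TopologicalSpace X] [MeasurableSpace X]
    {ι : Type*} (t : Finset ι) (U : ι → Set X) (μ : Measure X)
    (h : ∀ i ∈ t, μ (frontier (U i)) = 0) : μ (frontier (⋂ i ∈ t, U i)) = 0 := by
  classical
  induction t using Finset.induction_on with
  | empty => simp
  | @insert a s ha ih =>
    rw [Finset.set_biInter_insert]
    refine measure_mono_null ((frontier_inter_subset _ _).trans
      (Set.union_subset_union Set.inter_subset_left Set.inter_subset_right))
      (measure_union_null (h a (Finset.mem_insert_self a s))
        (ih fun i hi => h i (Finset.mem_insert_of_mem hi)))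

private lemma frontier_null_biUnion {X : Type*} [TopologicalSpace X] [MeasurableSpace X]
    {ι : Type*} (t : Finset ι) (U : ι → Set X) (μ : Measure X)
    (h : ∀ i ∈ t, μ (frontier (U i)) = 0) : μ (frontier (⋃ i ∈ t, U i)) = 0 := by
  classical
  induction t using Finset.induction_on with
  | empty => simp
  | @insert a s ha ih =>
    rw [Finset.set_biUnion_insert]
    exact measure_mono_null ((frontier_union_subset _ _).trans
      (Set.union_subset_union Set.inter_subset_left Set.inter_subset_right))
      (measure_union_null (h a (Finset.mem_insert_self a s))
        (ih fun i hi => h i (Finset.mem_insert_of_mem hi)))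

theorem small_boundary_separation_tfae {X : Type*} [TopologicalSpace X] [CompactSpace X]
    [TopologicalSpace.MetrizableSpace X] [MeasurableSpace X] [BorelSpace X]
    (N : Set (ProbabilityMeasure X)) (hN : IsClosed N) :
    List.TFAE
      [∃ B : Set (Set X), TopologicalSpace.IsTopologicalBasis B ∧
          ∀ U ∈ B, ∀ μ ∈ N, (μ : Measure X) (frontier U) = 0,
        ∀ A₁ A₂ : Set X, IsClosed A₁ → IsClosed A₂ → Disjoint A₁ A₂ →
          ∃ U : Set X, IsOpen U ∧ A₁ ⊆ U ∧ A₂ ∩ closure U = ∅ ∧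
            ∀ μ ∈ N, (μ : Measure X) (frontier U) = 0,
        ∀ x y : X, x ≠ y →
          ∃ U : Set X, IsOpen U ∧ x ∈ U ∧ y ∉ closure U ∧
            ∀ μ ∈ N, (μ : Measure X) (frontier U) = 0] := by
  classical
  letI := TopologicalSpace.metrizableSpaceMetric X
  tfae_have 1 → 3 := by
    rintro ⟨B, hB, hB0⟩ x y hxy
    -- regularity: find a closed nbhd of x inside {y}ᶜ
    obtain ⟨C, ⟨hCn, hCc⟩, hCy⟩ := (closed_nhds_basis x).mem_iff.mp
      (isOpen_compl_singleton.mem_nhds (by simpa using hxy) :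
        ({y}ᶜ : Set X) ∈ 𝓝 x)
    obtain ⟨U, hUB, hxU, hUC⟩ := hB.exists_subset_of_mem_open (mem_interior_iff_mem_nhds.mpr hCn)
      isOpen_interior
    refine ⟨U, hB.isOpen hUB, hxU, ?_, hB0 U hUB⟩
    intro hyU
    have : y ∈ C := hCc.closure_subset_iff.mpr (hUC.trans interior_subset) hyU
    exact hCy this rfl
  tfae_have 3 → 2 := by
    intro h3 A₁ A₂ hA₁ hA₂ hd
    -- Step 1: for each x ∈ A₁ a small-boundary open V with closure V disjoint from A₂
    have step1 : ∀ x ∈ A₁, ∃ V : Set X, IsOpen V ∧ x ∈ V ∧ A₂ ∩ closure V = ∅ ∧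
        ∀ μ ∈ N, (μ : Measure X) (frontier V) = 0 := by
      intro x hx
      have key : ∀ y : A₂, ∃ U : Set X, IsOpen U ∧ x ∈ U ∧ (y : X) ∉ closure U ∧
          ∀ μ ∈ N, (μ : Measure X) (frontier U) = 0 := fun y =>
        h3 x y (fun h => (hd.ne_of_mem hx y.2) h)
      choose U hUo hxU hyU hU0 using key
      have hcov : A₂ ⊆ ⋃ y : A₂, (closure (U y))ᶜ := fun z hz =>
        Set.mem_iUnion.mpr ⟨⟨z, hz⟩, hyU ⟨z, hz⟩⟩
      obtain ⟨t, ht⟩ := (hA₂.isCompact).elim_finite_subcover _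
        (fun y => (isClosed_closure (s := U y)).isOpen_compl) hcov
      refine ⟨⋂ y ∈ t, U y, isOpen_biInter_finset fun y _ => hUo y,
        Set.mem_biInter fun y _ => hxU y, ?_, fun μ hμ =>
        frontier_null_biInter t U _ fun y _ => hU0 y μ hμ⟩
      ext z
      simp only [Set.mem_inter_iff, Set.mem_empty_iff_false, iff_false, not_and]
      intro hz hzc
      obtain ⟨y, hyt, hy⟩ := Set.mem_iUnion₂.mp (ht hz)
      exact hy (closure_mono (Set.biInter_subset_of_mem hyt) hzc)
    choose! V hVo hxV hVA₂ hV0 using step1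
    have hcov : A₁ ⊆ ⋃ x : A₁, V x := fun z hz => Set.mem_iUnion.mpr ⟨⟨z, hz⟩, hxV z hz⟩
    obtain ⟨t, ht⟩ := (hA₁.isCompact).elim_finite_subcover (fun x : A₁ => V x)
      (fun x => hVo x x.2) hcov
    refine ⟨⋃ x ∈ t, V x, isOpen_biUnion fun x _ => hVo x x.2,
      fun z hz => (ht hz), ?_, fun μ hμ =>
      frontier_null_biUnion t (fun x : A₁ => V x) _ fun x _ => hV0 x x.2 μ hμ⟩
    rw [t.closure_biUnion]
    ext z
    simp only [Set.mem_inter_iff, Set.mem_iUnion, Set.mem_empty_iff_false, iff_false, not_and]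
    rintro hz ⟨x, hxt, hzc⟩
    have hmem : z ∈ A₂ ∩ closure (V x) := ⟨hz, hzc⟩
    rw [hVA₂ x x.2] at hmem
    exact hmem
  tfae_have 2 → 1 := by
    intro h2
    refine ⟨{U | IsOpen U ∧ ∀ μ ∈ N, (μ : Measure X) (frontier U) = 0},
      TopologicalSpace.isTopologicalBasis_of_isOpen_of_nhds (fun U hU => hU.1) ?_,
      fun U hU => hU.2⟩
    intro x W hxW hWo
    obtain ⟨U, hUo, hxU, hWU, hU0⟩ := h2 {x} Wᶜ isClosed_singleton hWo.isClosed_compl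
      (Set.disjoint_left.mpr (by rintro z rfl; simpa using hxW))
    refine ⟨U, ⟨hUo, hU0⟩, hxU rfl, fun z hz => by_contra fun hzW => ?_⟩
    have : z ∈ (Wᶜ : Set X) ∩ closure U := ⟨hzW, subset_closure hz⟩
    rw [hWU] at this; exact this
  tfae_finish
end

section
/- Let X be a compact metrizable space and N a closed (hence compact) subset of the space of Borel probability measures on X. Suppose X has the N-SBP. Let A be a closed N-small subset of X, let V be an open set with A ⊆ V, and let ε > 0. Then there is an open set U with A ⊆ U ⊆ closure(U) ⊆ V, ∂U is N-small, and μ(U) < ε for all μ ∈ N. -/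
open MeasureTheory Topology

/-- A Borel set is `N`-small if it is null for every measure in `N`. -/
def NSmall {X : Type*} [TopologicalSpace X] [MeasurableSpace X]
    (N : Set (ProbabilityMeasure X)) (A : Set X) : Prop :=
  ∀ μ ∈ N, (μ : Measure X) A = 0

/-- `X` has the `N`-SBP if its topology has a basis of open sets with `N`-small boundary. -/
def NSBP {X : Type*} [TopologicalSpace X] [MeasurableSpace X]
    (N : Set (ProbabilityMeasure X)) : Prop :=
  ∃ B : Set (Set X), TopologicalSpace.IsTopologicalBasis B ∧ ∀ U ∈ B, NSmall N (frontier U)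

/-!
Since `X` is compact, so is the space of probability measures (Prokhorov), hence so is `N`.
For closed `F` the map `μ ↦ μ F` is upper semicontinuous (portmanteau), so the sets
`{μ | μ (cthickening r A) < ε}` are open; as `r ↓ 0` they increase and cover `N` because `A`
is `N`-small, so one `r` works for all of `N`. Covering the compact set `A` by finitely many
basic sets whose closures lie in `V ∩ thickening r A` gives `U`: its frontier lies in the union
of their frontiers.
-/

open Filter Set TopologicalSpace

theorem NSmall.mono {X : Type*} [TopologicalSpace X] [MeasurableSpace X]
    {N : Set (ProbabilityMeasure X)} {A B : Set X} (hB : NSmall N B) (hAB : A ⊆ B) :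
    NSmall N A :=
  fun μ hμ => measure_mono_null hAB (hB μ hμ)

theorem NSmall.biUnion {X ι : Type*} [TopologicalSpace X] [MeasurableSpace X]
    {N : Set (ProbabilityMeasure X)} {I : Set ι} (hI : I.Countable) {f : ι → Set X}
    (h : ∀ i ∈ I, NSmall N (f i)) : NSmall N (⋃ i ∈ I, f i) :=
  fun μ hμ => (measure_biUnion_null_iff hI).2 fun i hi => h i hi μ hμ

theorem Set.Finite.frontier_sUnion_subset {X : Type*} [TopologicalSpace X] {S : Set (Set X)}
    (hS : S.Finite) : frontier (⋃₀ S) ⊆ ⋃ s ∈ S, frontier s := by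
  rintro x ⟨hx_closure, hx_interior⟩
  rw [hS.closure_sUnion, mem_iUnion₂] at hx_closure
  obtain ⟨s, hs, hxs⟩ := hx_closure
  exact mem_biUnion hs ⟨hxs, fun hx => hx_interior (interior_mono (subset_sUnion_of_mem hs) hx)⟩

theorem TopologicalSpace.IsTopologicalBasis.exists_finite_cover_closure_subset
    {X : Type*} [TopologicalSpace X] [RegularSpace X] {B : Set (Set X)}
    (hB : IsTopologicalBasis B) {K G : Set X} (hK : IsCompact K) (hG : IsOpen G) (hKG : K ⊆ G) :
    ∃ t ⊆ B, t.Finite ∧ K ⊆ ⋃₀ t ∧ closure (⋃₀ t) ⊆ G := by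
  have hcover : K ⊆ ⋃ u ∈ {u ∈ B | closure u ⊆ G}, u := fun x hx => by
    obtain ⟨u, hu, hxu, hclos⟩ := hB.exists_closure_subset (hG.mem_nhds (hKG hx))
    exact mem_biUnion ⟨hu, hclos⟩ hxu
  obtain ⟨t, ht, htfin, hKt⟩ :=
    hK.elim_finite_subcover_image (fun u hu => hB.isOpen hu.1) hcover
  refine ⟨t, fun u hu => (ht hu).1, htfin, by rwa [sUnion_eq_biUnion], ?_⟩
  rw [htfin.closure_sUnion]
  exact iUnion₂_subset fun u hu => (ht hu).2

theorem ProbabilityMeasure.upperSemicontinuous_measure_of_isClosed {Ω : Type*}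
    [MeasurableSpace Ω] [TopologicalSpace Ω] [OpensMeasurableSpace Ω] [HasOuterApproxClosed Ω]
    {F : Set Ω} (hF : IsClosed F) :
    UpperSemicontinuous fun μ : ProbabilityMeasure Ω => (μ : Measure Ω) F :=
  upperSemicontinuous_iff_limsup_le.2 fun _ =>
    ProbabilityMeasure.limsup_measure_closed_le_of_tendsto tendsto_id hF

theorem IsCompact.exists_pos_forall_measure_cthickening_lt {X : Type*} [PseudoMetricSpace X]
    [MeasurableSpace X] [OpensMeasurableSpace X] {K : Set (ProbabilityMeasure X)}
    (hK : IsCompact K) {A : Set X} (hA : IsClosed A) (hAsmall : NSmall K A)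
    {c : ENNReal} (hc : 0 < c) :
    ∃ r > 0, ∀ μ ∈ K, (μ : Measure X) (Metric.cthickening r A) < c := by
  set r : ℕ → ℝ := fun n => 1 / ((n : ℝ) + 1)
  set U : ℕ → Set (ProbabilityMeasure X) :=
    fun n => {μ | (μ : Measure X) (Metric.cthickening (r n) A) < c}
  have hU_open : ∀ n, IsOpen (U n) := fun n =>
    (ProbabilityMeasure.upperSemicontinuous_measure_of_isClosed
      Metric.isClosed_cthickening).isOpen_preimage c
  have hU_mono : Monotone U := fun m n hmn μ hμ =>
    (measure_mono (Metric.cthickening_mono (Nat.one_div_le_one_div hmn) A)).trans_lt hμ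
  have hKU : K ⊆ ⋃ n, U n := fun μ hμ => by
    have hlim : Tendsto (fun n => (μ : Measure X) (Metric.cthickening (r n) A)) atTop (𝓝 0) := by
      rw [← hAsmall μ hμ]
      exact (tendsto_measure_cthickening_of_isClosed (μ := (μ : Measure X))
        ⟨1, one_pos, MeasureTheory.measure_ne_top _ _⟩ hA).comp
        tendsto_one_div_add_atTop_nhds_zero_nat
    exact mem_iUnion.2 (hlim.eventually (gt_mem_nhds hc)).exists
  obtain ⟨n, hn⟩ := hK.elim_directed_cover U hU_open hKU hU_mono.directed_le
  exact ⟨r n, Nat.one_div_pos_of_nat, hn⟩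

theorem small_separation {X : Type*} [TopologicalSpace X] [CompactSpace X]
    [TopologicalSpace.MetrizableSpace X] [MeasurableSpace X] [BorelSpace X]
    (N : Set (ProbabilityMeasure X)) (hN : IsClosed N) (hSBP : NSBP N)
    (A : Set X) (hA : IsClosed A) (hAsmall : NSmall N A)
    (V : Set X) (hV : IsOpen V) (hAV : A ⊆ V) (ε : ℝ) (hε : 0 < ε) :
    ∃ U : Set X, IsOpen U ∧ A ⊆ U ∧ closure U ⊆ V ∧ NSmall N (frontier U) ∧
      ∀ μ ∈ N, (μ : Measure X) U < ENNReal.ofReal ε := by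
  let _ : MetricSpace X := TopologicalSpace.metrizableSpaceMetric X
  obtain ⟨r, hr, hr_small⟩ := hN.isCompact.exists_pos_forall_measure_cthickening_lt hA hAsmall
    (ENNReal.ofReal_pos.2 hε)
  obtain ⟨B, hB, hB_small⟩ := hSBP
  obtain ⟨t, htB, ht_fin, hAt, ht_closure⟩ := hB.exists_finite_cover_closure_subset hA.isCompact
    (hV.inter Metric.isOpen_thickening) (subset_inter hAV (Metric.self_subset_thickening hr A))
  refine ⟨⋃₀ t, isOpen_sUnion fun u hu => hB.isOpen (htB hu), hAt,
    ht_closure.trans inter_subset_left, ?_, fun μ hμ => ?_⟩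
  · exact (NSmall.biUnion ht_fin.countable fun u hu => hB_small u (htB hu)).mono
      ht_fin.frontier_sUnion_subset
  · have hU_sub : ⋃₀ t ⊆ Metric.cthickening r A :=
      subset_closure.trans <| ht_closure.trans <| inter_subset_right.trans <|
        Metric.thickening_subset_cthickening r A
    exact (measure_mono hU_sub).trans_lt (hr_small μ hμ)
end

section
/- Let X be a compact metrizable space with the N-SBP for a closed set N of Borel probability measures. Let A₀ and A₁ be disjoint closed subsets of X, let μ be an atomless Borel probability measure on X, and let ε, C > 0. Then there exist an integer M ≥ C and open sets U₁, ..., U_M ⊆ X such that: A₀ ⊆ U₁; closure(U_j) ⊆ U_{j+1} for j = 1, ..., M−1; U_M = X \ A₁; ∂U_j is N-small for j = 1, ..., M−1; μ(U₁ \ A₀) < ε; and μ(U_{j+1} \ closure(U_j)) < ε for j = 1, ..., M−1. -/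
open MeasureTheory Topology

open Set
open scoped ENNReal

/-! Up to ε/2, the measure of `A₁ᶜ` sits on a compact set `T`, and since `μ` has no atoms `T` is
covered by finitely many closed pieces of measure < ε/2 inside `A₁ᶜ`. The SBP thickens any closed
`K ⊆ A₁ᶜ` to an open set with `N`-small frontier, closure in `A₁ᶜ` and excess measure < ε/2;
thickening the previous closure together with one new piece at a time gives increments of measure
< ε, and once `T` is absorbed the last step up to `A₁ᶜ` costs < ε/2. Further thickening steps with
no new piece make the chain as long as required. -/

theorem Finset.frontier_biUnion_subset {X ι : Type*} [TopologicalSpace X] (t : Finset ι)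
    (f : ι → Set X) : frontier (⋃ i ∈ t, f i) ⊆ ⋃ i ∈ t, frontier (f i) := by
  rintro x ⟨hx, hxi⟩
  rw [t.closure_biUnion] at hx
  obtain ⟨i, hi, hxc⟩ := mem_iUnion₂.1 hx
  exact mem_iUnion₂.2
    ⟨i, hi, hxc, fun h => hxi (interior_mono (Set.subset_biUnion_of_mem hi) h)⟩

section

variable {X : Type*} [TopologicalSpace X] [MeasurableSpace X] {N : Set (ProbabilityMeasure X)}
  (μ : Measure X)

theorem exists_isClosed_cover_measure_lt [RegularSpace X] [μ.OuterRegular]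
    [NullSingletonClass μ] {T V : Set X} (hT : IsCompact T) (hV : IsOpen V) (hTV : T ⊆ V)
    {δ : ℝ≥0∞} (hδ : δ ≠ 0) :
    ∃ (m : ℕ) (P : ℕ → Set X), (∀ n, IsClosed (P n)) ∧ (∀ n, P n ⊆ V) ∧
      (∀ n, μ (P n) < δ) ∧ T ⊆ ⋃ n < m, P n := by
  have hsmall : ∀ x ∈ V, ∃ F ∈ 𝓝 x, IsClosed F ∧ F ⊆ V ∧ μ F < δ := by
    intro x hx
    obtain ⟨O, hxO, hO, hOμ⟩ :=
      Set.exists_isOpen_lt_of_lt (μ := μ) {x} δ (by simpa using pos_iff_ne_zero.2 hδ)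
    obtain ⟨F, hF, hFc, hFO⟩ :=
      exists_mem_nhds_isClosed_subset (Filter.inter_mem (hO.mem_nhds (hxO rfl)) (hV.mem_nhds hx))
    exact ⟨F, hF, hFc, hFO.trans inter_subset_right,
      (measure_mono (hFO.trans inter_subset_left)).trans_lt hOμ⟩
  choose! F hFx hFc hFV hFμ using hsmall
  obtain ⟨t, htT, hTt⟩ := hT.elim_nhds_subcover F fun x hx => hFx x (hTV hx)
  set l := t.toList
  set P : ℕ → Set X := fun n => if h : n < l.length then F l[n] else ∅
  have hP : ∀ n, IsClosed (P n) ∧ P n ⊆ V ∧ μ (P n) < δ := by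
    intro n
    by_cases h : n < l.length
    · have hlV : l[n] ∈ V := hTV (htT _ (Finset.mem_toList.1 (List.getElem_mem h)))
      simpa [P, h] using ⟨hFc _ hlV, hFV _ hlV, hFμ _ hlV⟩
    · simpa [P, h] using pos_iff_ne_zero.2 hδ
  refine ⟨l.length, P, fun n => (hP n).1, fun n => (hP n).2.1, fun n => (hP n).2.2, ?_⟩
  refine hTt.trans (iUnion₂_subset fun y hy => ?_)
  obtain ⟨n, hn, rfl⟩ := List.getElem_of_mem (Finset.mem_toList.2 hy)
  exact (dif_pos hn).symm.subset.trans (subset_iUnion₂ (s := fun n _ => P n) n hn)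

structure IsNChain (N : Set (ProbabilityMeasure X)) (K V : Set X) (δ : ℝ≥0∞)
    (U : ℕ → Set X) : Prop where
  isOpen : ∀ n, IsOpen (U n)
  subset_zero : K ⊆ U 0
  closure_subset_succ : ∀ n, closure (U n) ⊆ U (n + 1)
  closure_subset : ∀ n, closure (U n) ⊆ V
  nsmall_frontier : ∀ n, NSmall N (frontier (U n))
  measure_zero_sdiff_lt : μ (U 0 \ K) < δ
  measure_succ_sdiff_lt : ∀ n, μ (U (n + 1) \ closure (U n)) < δ

namespace IsNChain

variable {μ} {K V : Set X} {δ : ℝ≥0∞} {U : ℕ → Set X}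

theorem monotone (hU : IsNChain μ N K V δ U) : Monotone U :=
  monotone_nat_of_le_succ fun n => subset_closure.trans (hU.closure_subset_succ n)

theorem exists_finite_chain (hU : IsNChain μ N K V δ U) (hV : IsOpen V) {M : ℕ} (hM : 2 ≤ M)
    (hlast : μ (V \ closure (U (M - 2))) < δ) :
    ∃ W : ℕ → Set X, (∀ j, 1 ≤ j → j ≤ M → IsOpen (W j)) ∧ K ⊆ W 1 ∧
      (∀ j, 1 ≤ j → j + 1 ≤ M → closure (W j) ⊆ W (j + 1)) ∧ W M = V ∧
      (∀ j, 1 ≤ j → j + 1 ≤ M → NSmall N (frontier (W j))) ∧ μ (W 1 \ K) < δ ∧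
      (∀ j, 1 ≤ j → j + 1 ≤ M → μ (W (j + 1) \ closure (W j)) < δ) := by
  classical
  set W : ℕ → Set X := fun j => if j = M then V else U (j - 1)
  have hW : ∀ i, i + 1 < M → W (i + 1) = U i := fun i hi => by simp [W, hi.ne]
  have hWM : W M = V := by simp [W]
  have hW1 : W 1 = U 0 := hW 0 (by omega)
  refine ⟨W, fun j hj hjM => ?_, hW1 ▸ hU.subset_zero, fun j hj hjM => ?_, hWM,
    fun j hj hjM => ?_, hW1 ▸ hU.measure_zero_sdiff_lt, fun j hj hjM => ?_⟩
  · obtain ⟨i, rfl⟩ : ∃ i, j = i + 1 := ⟨j - 1, by omega⟩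
    rcases hjM.lt_or_eq with hjM | rfl
    exacts [hW i hjM ▸ hU.isOpen i, hWM ▸ hV]
  all_goals
    obtain ⟨i, rfl⟩ : ∃ i, j = i + 1 := ⟨j - 1, by omega⟩
    rw [hW i (by omega)]
  · rcases hjM.lt_or_eq with hjM | hjM
    exacts [hW _ hjM ▸ hU.closure_subset_succ i, hjM ▸ hWM ▸ hU.closure_subset i]
  · exact hU.nsmall_frontier i
  · rcases hjM.lt_or_eq with hjM | hjM
    · exact hW _ hjM ▸ hU.measure_succ_sdiff_lt i
    · rw [hjM, hWM, show i = M - 2 by omega]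
      exact hlast

end IsNChain

variable [CompactSpace X] [NormalSpace X] [OpensMeasurableSpace X] [IsFiniteMeasure μ]
  [μ.OuterRegular]

theorem NSBP.exists_open_between (hSBP : NSBP N) {K V : Set X} (hK : IsClosed K)
    (hV : IsOpen V) (hKV : K ⊆ V) {δ : ℝ≥0∞} (hδ : δ ≠ 0) :
    ∃ U, IsOpen U ∧ K ⊆ U ∧ closure U ⊆ V ∧ NSmall N (frontier U) ∧ μ (U \ K) < δ := by
  obtain ⟨B, hB, hBsmall⟩ := hSBP
  obtain ⟨W, hKW, hWo, -, hWK⟩ :=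
    hK.measurableSet.exists_isOpen_sdiff_lt (measure_ne_top μ _) hδ
  obtain ⟨W', hW'o, hKW', hW'⟩ :=
    normal_exists_closure_subset hK (hWo.inter hV) (subset_inter hKW hKV)
  choose b hbB hxb hbW using fun x : K => hB.exists_subset_of_mem_open (hKW' x.2) hW'o
  obtain ⟨t, ht⟩ := hK.isCompact.elim_finite_subcover b (fun x => hB.isOpen (hbB x))
    fun x hx => mem_iUnion.2 ⟨⟨x, hx⟩, hxb ⟨x, hx⟩⟩
  have hUW' : ⋃ x ∈ t, b x ⊆ W' := iUnion₂_subset fun x _ => hbW x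
  refine ⟨⋃ x ∈ t, b x, isOpen_biUnion fun x _ => hB.isOpen (hbB x), ht,
    (closure_mono hUW').trans (hW'.trans inter_subset_right), fun ν hν => ?_, ?_⟩
  · exact measure_mono_null (t.frontier_biUnion_subset b)
      ((measure_biUnion_null_iff t.countable_toSet).2 fun x _ => hBsmall _ (hbB x) ν hν)
  · exact (measure_mono (sdiff_subset_sdiff_left
      (hUW'.trans (subset_closure.trans (hW'.trans inter_subset_left))))).trans_lt hWK

theorem NSBP.exists_isNChain (hSBP : NSBP N) {K V : Set X} (hK : IsClosed K) (hV : IsOpen V)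
    (hKV : K ⊆ V) {P : ℕ → Set X} (hP : ∀ n, IsClosed (P n)) (hPV : ∀ n, P n ⊆ V)
    {δ : ℝ≥0∞} (hPμ : ∀ n, μ (P n) < δ) :
    ∃ U, IsNChain μ N K V (δ + δ) U ∧ ∀ n, P n ⊆ U (n + 1) := by
  have hδ : δ ≠ 0 := (pos_of_gt (hPμ 0)).ne'
  choose! F hFo hKF hFV hFs hFμ using fun L (hL : IsClosed L) (hLV : L ⊆ V) =>
    hSBP.exists_open_between μ hL hV hLV hδ
  let L : ℕ → Set X := fun n => Nat.rec K (fun n Ln => closure (F Ln) ∪ P n) n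
  have hL : ∀ n, IsClosed (L n) ∧ L n ⊆ V := by
    intro n
    induction n with
    | zero => exact ⟨hK, hKV⟩
    | succ n ih => exact ⟨isClosed_closure.union (hP n), union_subset (hFV _ ih.1 ih.2) (hPV n)⟩
  refine ⟨fun n => F (L n), ⟨fun n => hFo _ (hL n).1 (hL n).2, hKF _ hK hKV,
    fun n => subset_union_left.trans (hKF _ (hL (n + 1)).1 (hL (n + 1)).2),
    fun n => hFV _ (hL n).1 (hL n).2, fun n => hFs _ (hL n).1 (hL n).2,
    (hFμ _ hK hKV).trans_le le_self_add, fun n => ?_⟩,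
    fun n => subset_union_right.trans (hKF _ (hL (n + 1)).1 (hL (n + 1)).2)⟩
  have hsplit : F (L (n + 1)) \ closure (F (L n)) ⊆ (F (L (n + 1)) \ L (n + 1)) ∪ P n := by
    intro x
    simp only [L, mem_sdiff, mem_union]
    tauto
  calc μ (F (L (n + 1)) \ closure (F (L n)))
      ≤ μ (F (L (n + 1)) \ L (n + 1)) + μ (P n) :=
        (measure_mono hsplit).trans (measure_union_le _ _)
    _ < δ + δ := ENNReal.add_lt_add (hFμ _ (hL (n + 1)).1 (hL (n + 1)).2) (hPμ n)

end

theorem sbp_to_function_one_measure_general {X : Type*} [TopologicalSpace X] [CompactSpace X]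
    [TopologicalSpace.MetrizableSpace X] [MeasurableSpace X] [BorelSpace X]
    (N : Set (ProbabilityMeasure X)) (hSBP : NSBP N)
    (A₀ A₁ : Set X) (hA₀ : IsClosed A₀) (hA₁ : IsClosed A₁) (hdisj : Disjoint A₀ A₁)
    (μ : ProbabilityMeasure X) (hatomless : ∀ x : X, (μ : Measure X) {x} = 0)
    (ε C : ℝ) (hε : 0 < ε) :
    ∃ M : ℕ, C ≤ M ∧ ∃ U : ℕ → Set X,
      (∀ j, 1 ≤ j → j ≤ M → IsOpen (U j)) ∧
      A₀ ⊆ U 1 ∧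
      (∀ j, 1 ≤ j → j + 1 ≤ M → closure (U j) ⊆ U (j + 1)) ∧
      U M = A₁ᶜ ∧
      (∀ j, 1 ≤ j → j + 1 ≤ M → NSmall N (frontier (U j))) ∧
      (μ : Measure X) (U 1 \ A₀) < ENNReal.ofReal ε ∧
      (∀ j, 1 ≤ j → j + 1 ≤ M →
        (μ : Measure X) (U (j + 1) \ closure (U j)) < ENNReal.ofReal ε) := by
  have : NullSingletonClass (μ : Measure X) := ⟨hatomless⟩
  have hV : IsOpen A₁ᶜ := hA₁.isOpen_compl
  have he : ENNReal.ofReal ε / 2 ≠ 0 := by simpa using hε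
  obtain ⟨T, hTV, hT, hTμ⟩ :=
    hV.measurableSet.exists_isClosed_sdiff_lt (measure_ne_top (μ : Measure X) _) he
  obtain ⟨m, P, hP, hPV, hPμ, hTP⟩ :=
    exists_isClosed_cover_measure_lt (μ : Measure X) hT.isCompact hV hTV he
  obtain ⟨U, hU, hPU⟩ := hSBP.exists_isNChain μ hA₀ hV hdisj.subset_compl_right hP hPV hPμ
  rw [ENNReal.add_halves] at hU
  set M := max ⌈C⌉₊ (m + 2)
  have hTU : T ⊆ U (M - 2) :=
    hTP.trans (iUnion₂_subset fun n hn => (hPU n).trans (hU.monotone (by omega)))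
  refine ⟨M, (Nat.le_ceil C).trans (by exact_mod_cast le_max_left _ _),
    hU.exists_finite_chain hV (by omega) ?_⟩
  calc (μ : Measure X) (A₁ᶜ \ closure (U (M - 2))) ≤ (μ : Measure X) (A₁ᶜ \ T) :=
        measure_mono (sdiff_subset_sdiff_right (hTU.trans subset_closure))
    _ < ENNReal.ofReal ε / 2 := hTμ
    _ ≤ ENNReal.ofReal ε := ENNReal.half_le_self

theorem sbp_to_function_one_measure {X : Type*} [TopologicalSpace X] [CompactSpace X]
    [TopologicalSpace.MetrizableSpace X] [MeasurableSpace X] [BorelSpace X]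
    (N : Set (ProbabilityMeasure X)) (hN : IsClosed N) (hSBP : NSBP N)
    (A₀ A₁ : Set X) (hA₀ : IsClosed A₀) (hA₁ : IsClosed A₁) (hdisj : Disjoint A₀ A₁)
    (μ : ProbabilityMeasure X) (hatomless : ∀ x : X, (μ : Measure X) {x} = 0)
    (ε C : ℝ) (hε : 0 < ε) (hC : 0 < C) :
    ∃ M : ℕ, C ≤ M ∧ ∃ U : ℕ → Set X,
      (∀ j, 1 ≤ j → j ≤ M → IsOpen (U j)) ∧
      A₀ ⊆ U 1 ∧
      (∀ j, 1 ≤ j → j + 1 ≤ M → closure (U j) ⊆ U (j + 1)) ∧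
      U M = A₁ᶜ ∧
      (∀ j, 1 ≤ j → j + 1 ≤ M → NSmall N (frontier (U j))) ∧
      (μ : Measure X) (U 1 \ A₀) < ENNReal.ofReal ε ∧
      (∀ j, 1 ≤ j → j + 1 ≤ M →
        (μ : Measure X) (U (j + 1) \ closure (U j)) < ENNReal.ofReal ε) :=
  sbp_to_function_one_measure_general N hSBP A₀ A₁ hA₀ hA₁ hdisj μ hatomless ε C hε
end

section
/- Let G ↪ X and H ↪ Y be continuous actions of countable groups on compact metrizable spaces. Then every ergodic invariant Borel probability measure μ for the product action G × H ↪ X × Y is a product measure: μ = μ_X × μ_Y, where μ_X and μ_Y are the marginals of μ on X and Y, which are G-invariant and H-invariant respectively. -/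
/-!
Fix a measurable `B ⊆ Y`. The measure `A ↦ μ (A ×ˢ B)` on `X` is `G`-invariant and absolutely
continuous with respect to the marginal `μ_X`, and `μ_X` is `G`-ergodic because `G`-invariant
subsets of `X` lift to `(G × H)`-invariant cylinders. The Radon–Nikodym density of an invariant
measure with respect to an ergodic one is a.e. invariant, hence a.e. constant, so
`μ (A ×ˢ B) = μ_X A * μ_Y B`.
-/

open MeasureTheory Filter Set

namespace MeasureTheory

section ErgodicSMul

variable {G α : Type*} [Group G] [MulAction G α] [MeasurableSpace α] {μ : Measure α}

theorem ErgodicSMul.ae_eq_const_of_ae_eq_smul [ErgodicSMul G α μ] {β : Type*} [Nonempty β]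
    [MeasurableSpace β] [MeasurableSpace.CountablySeparated β] {f : α → β} (hf : Measurable f)
    (hinv : ∀ g : G, (fun x ↦ f (g • x)) =ᵐ[μ] f) : ∃ c, f =ᵐ[μ] Function.const α c :=
  exists_eventuallyEq_const_of_forall_separating MeasurableSet fun U hU ↦
    eventuallyConst_set.1 <| ErgodicSMul.aeconst_of_forall_preimage_smul_ae_eq (hf hU) fun g ↦
      (hinv g).mono fun _ hx ↦ congrArg (· ∈ U) hx

variable (G) in
theorem ErgodicSMul.eq_smul_of_absolutelyContinuous [MeasurableConstSMul G α]
    [IsProbabilityMeasure μ] [ErgodicSMul G α μ] {ρ : Measure α} [IsFiniteMeasure ρ]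
    [SMulInvariantMeasure G α ρ] (hρ : ρ ≪ μ) : ρ = ρ univ • μ := by
  have hinv (g : G) : (fun x ↦ ρ.rnDeriv μ (g • x)) =ᵐ[μ] ρ.rnDeriv μ := by
    simpa only [MeasureTheory.map_smul] using (measurableEmbedding_const_smul g).rnDeriv_map ρ μ
  obtain ⟨c, hc⟩ := ErgodicSMul.ae_eq_const_of_ae_eq_smul (Measure.measurable_rnDeriv ρ μ) hinv
  have hρc : ρ = c • μ := by
    rw [← Measure.withDensity_rnDeriv_eq ρ μ hρ, withDensity_congr_ae hc]
    exact withDensity_const c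
  rw [hρc, Measure.smul_apply, measure_univ, smul_eq_mul, mul_one]

theorem ErgodicSMul.of_forall_preimage_smul_eq [Countable G] [MeasurableConstSMul G α]
    [IsProbabilityMeasure μ] [SMulInvariantMeasure G α μ]
    (h : ∀ s, MeasurableSet s → (∀ g : G, (g • ·) ⁻¹' s = s) → μ s = 0 ∨ μ s = 1) :
    ErgodicSMul G α μ where
  aeconst_of_forall_preimage_smul_ae_eq {s} hs hinv := by
    -- By countability of `G`, the saturation of `s` is a strictly invariant set a.e. equal to `s`.
    set t := ⋃ g : G, (g • ·) ⁻¹' s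
    have hts : t =ᵐ[μ] s := by
      simpa only [iUnion_const] using Filter.EventuallyEq.countable_iUnion hinv
    have htm : MeasurableSet t := .iUnion fun g ↦ measurable_const_smul g hs
    have htinv (k : G) : (k • ·) ⁻¹' t = t := by
      simp only [t, preimage_iUnion, preimage_preimage, smul_smul]
      exact (Equiv.mulRight k).surjective.iUnion_comp fun g ↦ (g • ·) ⁻¹' s
    clear_value t
    refine EventuallyConst.congr ?_ hts
    rcases h t htm htinv with h0 | h1
    · exact eventuallyConst_set.2 <| .inr <| measure_eq_zero_iff_ae_notMem.1 h0
    · exact eventuallyConst_set.2 <| .inl <| mem_ae_iff.2 <| (prob_compl_eq_zero_iff htm).2 h1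

end ErgodicSMul

section ProductAction

variable {X Y : Type*} [MeasurableSpace X] [MeasurableSpace Y]

theorem Measure.fst_map_prodMap {X' Y' : Type*} [MeasurableSpace X'] [MeasurableSpace Y']
    (μ : Measure (X × Y)) {f : X → X'} {g : Y → Y'} (hf : Measurable f) (hg : Measurable g) :
    (μ.map (Prod.map f g)).fst = μ.fst.map f :=
  (Measure.fst_map_prodMk (X := f ∘ Prod.fst) (hg.comp measurable_snd)).trans
    (Measure.map_map hf measurable_fst).symm

theorem Measure.snd_map_prodMap {X' Y' : Type*} [MeasurableSpace X'] [MeasurableSpace Y']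
    (μ : Measure (X × Y)) {f : X → X'} {g : Y → Y'} (hf : Measurable f) (hg : Measurable g) :
    (μ.map (Prod.map f g)).snd = μ.snd.map g :=
  (Measure.snd_map_prodMk (Y := g ∘ Prod.snd) (hf.comp measurable_fst)).trans
    (Measure.map_map hg measurable_snd).symm

variable {G : Type*} [Group G] [MulAction G X] [MeasurableConstSMul G X]

theorem smulInvariantMeasure_fst_restrict_preimage_snd {μ : Measure (X × Y)}
    (hμ : ∀ g : G, μ.map (Prod.map (g • ·) id) = μ) {B : Set Y} (hB : MeasurableSet B) :
    SMulInvariantMeasure G X (μ.restrict (Prod.snd ⁻¹' B)).fst := by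
  refine ((smulInvariantMeasure_tfae G _).out 0 5).2 fun g ↦ ?_
  have hm : Measurable (Prod.map (g • ·) id : X × Y → X × Y) :=
    (measurable_const_smul g).prodMap measurable_id
  have hrestrict : (μ.restrict (Prod.snd ⁻¹' B)).map (Prod.map (g • ·) id) =
      μ.restrict (Prod.snd ⁻¹' B) :=
    (Measure.restrict_map hm (measurable_snd hB)).symm.trans (by rw [hμ g])
  rw [← Measure.fst_map_prodMap _ (measurable_const_smul g) measurable_id, hrestrict]

theorem Measure.eq_prod_of_ergodicSMul_fst {μ : Measure (X × Y)} [IsProbabilityMeasure μ]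
    [ErgodicSMul G X μ.fst] (hμ : ∀ g : G, μ.map (Prod.map (g • ·) id) = μ) :
    μ = μ.fst.prod μ.snd := by
  refine (Measure.prod_eq fun A B hA hB ↦ ?_).symm
  set ρ := (μ.restrict (Prod.snd ⁻¹' B)).fst
  have hρ (s : Set X) (hs : MeasurableSet s) : ρ s = μ (s ×ˢ B) := by
    rw [Measure.fst_apply hs, Measure.restrict_apply (measurable_fst hs), Set.prod_eq]
  have := smulInvariantMeasure_fst_restrict_preimage_snd hμ hB
  have hac : ρ ≪ μ.fst := Measure.restrict_le_self.absolutelyContinuous.map measurable_fst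
  have hρB : ρ univ = μ.snd B := by rw [hρ univ .univ, univ_prod, Measure.snd_apply hB]
  calc μ (A ×ˢ B) = ρ A := (hρ A hA).symm
    _ = μ.snd B * μ.fst A := by
      conv_lhs => rw [ErgodicSMul.eq_smul_of_absolutelyContinuous G hac]
      rw [Measure.smul_apply, hρB, smul_eq_mul]
    _ = μ.fst A * μ.snd B := mul_comm _ _

end ProductAction

end MeasureTheory

theorem ergodic_product_action_measure_is_product_general {G H X Y : Type*}
    [Group G] [Countable G] [Group H]
    [TopologicalSpace X] [TopologicalSpace Y]
    [MeasurableSpace X] [BorelSpace X] [MeasurableSpace Y] [BorelSpace Y]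
    [MulAction G X] [ContinuousConstSMul G X]
    [MulAction H Y] [ContinuousConstSMul H Y]
    (μ : Measure (X × Y)) [IsProbabilityMeasure μ]
    (hinv : ∀ (g : G) (h : H),
      Measure.map (fun p : X × Y => (g • p.1, h • p.2)) μ = μ)
    (herg : ∀ A : Set (X × Y), MeasurableSet A →
      (∀ (g : G) (h : H), (fun p : X × Y => (g • p.1, h • p.2)) ⁻¹' A = A) →
      μ A = 0 ∨ μ A = 1) :
    μ = (μ.map Prod.fst).prod (μ.map Prod.snd) ∧
    (∀ g : G, Measure.map (fun x : X => g • x) (μ.map Prod.fst) = μ.map Prod.fst) ∧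
    (∀ h : H, Measure.map (fun y : Y => h • y) (μ.map Prod.snd) = μ.map Prod.snd) := by
  have hfst (g : G) : μ.fst.map (g • ·) = μ.fst := by
    rw [← μ.fst_map_prodMap (measurable_const_smul g) (measurable_const_smul (1 : H))]
    exact congrArg Measure.fst (hinv g 1)
  have hsnd (h : H) : μ.snd.map (h • ·) = μ.snd := by
    rw [← μ.snd_map_prodMap (measurable_const_smul (1 : G)) (measurable_const_smul h)]
    exact congrArg Measure.snd (hinv 1 h)
  have : SMulInvariantMeasure G X μ.fst := ((smulInvariantMeasure_tfae G _).out 0 5).2 hfst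
  have : ErgodicSMul G X μ.fst := .of_forall_preimage_smul_eq fun s hs hsinv ↦ by
    rw [Measure.fst_apply hs]
    exact herg _ (measurable_fst hs) fun g _ ↦ congrArg (Prod.fst ⁻¹' ·) (hsinv g)
  refine ⟨Measure.eq_prod_of_ergodicSMul_fst fun g : G ↦ ?_, hfst, hsnd⟩
  show μ.map (fun p ↦ (g • p.1, p.2)) = μ
  simpa only [one_smul] using hinv g 1

/-- An ergodic invariant measure for a product action is a product of its marginals,
which are invariant for the factor actions. -/
theorem ergodic_product_action_measure_is_product {G H X Y : Type*}
    [Group G] [Countable G] [Group H] [Countable H]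
    [TopologicalSpace X] [CompactSpace X] [TopologicalSpace.MetrizableSpace X]
    [TopologicalSpace Y] [CompactSpace Y] [TopologicalSpace.MetrizableSpace Y]
    [MeasurableSpace X] [BorelSpace X] [MeasurableSpace Y] [BorelSpace Y]
    [MulAction G X] [ContinuousConstSMul G X]
    [MulAction H Y] [ContinuousConstSMul H Y]
    (μ : Measure (X × Y)) [IsProbabilityMeasure μ]
    (hinv : ∀ (g : G) (h : H),
      Measure.map (fun p : X × Y => (g • p.1, h • p.2)) μ = μ)
    (herg : ∀ A : Set (X × Y), MeasurableSet A →
      (∀ (g : G) (h : H), (fun p : X × Y => (g • p.1, h • p.2)) ⁻¹' A = A) →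
      μ A = 0 ∨ μ A = 1) :
    μ = (μ.map Prod.fst).prod (μ.map Prod.snd) ∧
    (∀ g : G, Measure.map (fun x : X => g • x) (μ.map Prod.fst) = μ.map Prod.fst) ∧
    (∀ h : H, Measure.map (fun y : Y => h • y) (μ.map Prod.snd) = μ.map Prod.snd) :=
  ergodic_product_action_measure_is_product_general μ hinv herg
end

section
/- Let G ↪ X and H ↪ Y be continuous actions of countable groups on compact metrizable spaces, and suppose the product action G × H ↪ X × Y has the small boundary property. Then either H ↪ Y has the small boundary property or every G-invariant Borel probability measure on X is atomless. -/
/-!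
If `μ` is a `G`-invariant measure with an atom at `x` and `ν` is any `H`-invariant measure,
then `μ × ν` is invariant under the product action and
`μ {x} * ν (Prod.mk x ⁻¹' S) ≤ (μ × ν) S`. Slicing a small-boundary basis of `X × Y` along
the fibre `{x} × Y` therefore gives a basis of `Y` whose boundaries are `ν`-null.
-/

open MeasureTheory Topology

/-- A measure is invariant for the action of `G`. -/
def IsInvariantMeasure (G : Type*) {X : Type*} [Group G] [MulAction G X]
    [MeasurableSpace X] (μ : Measure X) : Prop :=
  ∀ g : G, Measure.map (fun x : X => g • x) μ = μ

/-- The small boundary property for the action of `G` on `X`: there is a basis of open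
sets whose boundaries are null for every `G`-invariant Borel probability measure. -/
def ActionSBP (G X : Type*) [Group G] [MulAction G X] [TopologicalSpace X]
    [MeasurableSpace X] : Prop :=
  ∃ B : Set (Set X), TopologicalSpace.IsTopologicalBasis B ∧
    ∀ U ∈ B, ∀ μ : ProbabilityMeasure X, IsInvariantMeasure G (μ : Measure X) →
      (μ : Measure X) (frontier U) = 0

/-- The small boundary property for the product action of `G × H` on `X × Y`. -/
def ProdActionSBP (G H X Y : Type*) [Group G] [Group H] [MulAction G X] [MulAction H Y]
    [TopologicalSpace X] [TopologicalSpace Y] [MeasurableSpace X] [MeasurableSpace Y] : Prop :=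
  ∃ B : Set (Set (X × Y)), TopologicalSpace.IsTopologicalBasis B ∧
    ∀ U ∈ B, ∀ μ : ProbabilityMeasure (X × Y),
      (∀ (g : G) (h : H),
        Measure.map (fun p : X × Y => (g • p.1, h • p.2)) (μ : Measure (X × Y)) =
          (μ : Measure (X × Y))) →
      (μ : Measure (X × Y)) (frontier U) = 0

theorem TopologicalSpace.IsTopologicalBasis.preimage_prodMk {X Y : Type*} [TopologicalSpace X]
    [TopologicalSpace Y] {B : Set (Set (X × Y))} (hB : IsTopologicalBasis B) (x : X) :
    IsTopologicalBasis ((Prod.mk x ⁻¹' ·) '' B) :=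
  hB.isInducing (isEmbedding_prodMkRight x).isInducing

theorem MeasureTheory.Measure.measure_singleton_mul_le_prod {X Y : Type*} [MeasurableSpace X]
    [MeasurableSpace Y] (μ : Measure X) (ν : Measure Y) [SFinite ν] (x : X)
    (s : Set (X × Y)) : μ {x} * ν (Prod.mk x ⁻¹' s) ≤ μ.prod ν s := by
  rw [← Measure.prod_prod]
  refine measure_mono ?_
  rintro ⟨a, b⟩ ⟨ha : a = x, hb⟩
  exact ha ▸ hb

section

variable {G H X Y : Type*} [Group G] [Group H] [MulAction G X] [MulAction H Y]
  [MeasurableSpace X] [MeasurableSpace Y] [MeasurableConstSMul G X] [MeasurableConstSMul H Y]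

theorem IsInvariantMeasure.prod {μ : Measure X} {ν : Measure Y} [SFinite μ] [SFinite ν]
    (hμ : IsInvariantMeasure G μ) (hν : IsInvariantMeasure H ν) (g : G) (h : H) :
    Measure.map (fun p : X × Y => (g • p.1, h • p.2)) (μ.prod ν) = μ.prod ν := by
  change Measure.map (Prod.map (g • ·) (h • ·)) _ = _
  rw [← Measure.map_prod_map μ ν (measurable_const_smul g) (measurable_const_smul h), hμ g, hν h]

theorem ProdActionSBP.actionSBP_right_of_measure_singleton_ne_zero [TopologicalSpace X]
    [TopologicalSpace Y] (hprod : ProdActionSBP G H X Y) {μ : ProbabilityMeasure X}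
    (hμ : IsInvariantMeasure G (μ : Measure X)) {x : X} (hx : (μ : Measure X) {x} ≠ 0) :
    ActionSBP H Y := by
  obtain ⟨B, hB, hBnull⟩ := hprod
  refine ⟨(Prod.mk x ⁻¹' ·) '' B, hB.preimage_prodMk x, ?_⟩
  rintro _ ⟨U, hU, rfl⟩ ν hν
  have hprod_null : (μ : Measure X).prod ν (frontier U) = 0 :=
    hBnull U hU (μ.prod ν) (hμ.prod hν)
  have hslice_null : (ν : Measure Y) (Prod.mk x ⁻¹' frontier U) = 0 := by
    have hle := Measure.measure_singleton_mul_le_prod (μ : Measure X) ν x (frontier U)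
    rw [hprod_null, nonpos_iff_eq_zero, mul_eq_zero] at hle
    exact hle.resolve_left hx
  exact measure_mono_null
    ((isEmbedding_prodMkRight x).continuous.frontier_preimage_subset U) hslice_null

end

theorem prod_sbp_implies_factor_sbp_or_atomless_general {G H X Y : Type*}
    [Group G] [Group H]
    [TopologicalSpace X]
    [TopologicalSpace Y]
    [MeasurableSpace X] [BorelSpace X] [MeasurableSpace Y] [BorelSpace Y]
    [MulAction G X] [ContinuousConstSMul G X]
    [MulAction H Y] [ContinuousConstSMul H Y]
    (hprod : ProdActionSBP G H X Y) :
    ActionSBP H Y ∨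
      ∀ μ : ProbabilityMeasure X, IsInvariantMeasure G (μ : Measure X) →
        ∀ x : X, (μ : Measure X) {x} = 0 := by
  by_contra! h
  obtain ⟨hY, μ, hμ, x, hx⟩ := h
  exact hY <| hprod.actionSBP_right_of_measure_singleton_ne_zero hμ hx

theorem prod_sbp_implies_factor_sbp_or_atomless {G H X Y : Type*}
    [Group G] [Countable G] [Group H] [Countable H]
    [TopologicalSpace X] [CompactSpace X] [TopologicalSpace.MetrizableSpace X]
    [TopologicalSpace Y] [CompactSpace Y] [TopologicalSpace.MetrizableSpace Y]
    [MeasurableSpace X] [BorelSpace X] [MeasurableSpace Y] [BorelSpace Y]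
    [MulAction G X] [ContinuousConstSMul G X]
    [MulAction H Y] [ContinuousConstSMul H Y]
    (hprod : ProdActionSBP G H X Y) :
    ActionSBP H Y ∨
      ∀ μ : ProbabilityMeasure X, IsInvariantMeasure G (μ : Measure X) →
        ∀ x : X, (μ : Measure X) {x} = 0 :=
  prod_sbp_implies_factor_sbp_or_atomless_general hprod
end

section
/- Let G ↪ X be a continuous action of a countable group on a compact metrizable space. Suppose that for every continuous action H ↪ Y of a countable group on a compact metrizable space, the product action G × H ↪ X × Y has the small boundary property. Then G ↪ X has the small boundary property and no finite orbits. -/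
open MeasureTheory Topology

/-!
When `H` acts trivially on `Y`, every `G`-invariant measure `μ` on `X` lifts to the invariant
measure `μ ⊗ δ_y` on `X × Y`. Lifting along the slice `x ↦ (x, y)` transfers the
small boundary property from `X × Y` to `X`. If `x` has a finite orbit, the uniform measure on
that orbit gives `(x, y)` positive mass for every `y`, so no point of `{x} × Y` lies on a null
boundary: every basic open set meets `{x} × Y` in a clopen slice. For the trivial action on the
connected space `[0, 1]` these slices cannot form a basis.
-/

open Set ProbabilityTheory TopologicalSpace

section InvariantMeasures

variable {G X : Type*} [Group G] [MulAction G X] [MeasurableSpace X] [MeasurableConstSMul G X]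

lemma isInvariantMeasure_count [MeasurableSingletonClass X] :
    IsInvariantMeasure G (Measure.count : Measure X) := by
  intro g
  ext A hA
  rw [Measure.map_apply (measurable_const_smul g) hA, preimage_smul, ← image_smul,
    Measure.count_injective_image (MulAction.injective g⁻¹)]

lemma IsInvariantMeasure.cond {μ : Measure X} (hμ : IsInvariantMeasure G μ) {s : Set X}
    (hs : MeasurableSet s) (hinv : ∀ g : G, (g • ·) ⁻¹' s = s) :
    IsInvariantMeasure G μ[|s] := by
  intro g
  have hrestrict : (μ.restrict s).map (g • ·) = μ.restrict s := by
    conv_lhs => rw [← hinv g]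
    rw [← Measure.restrict_map (measurable_const_smul g) hs, hμ g]
  rw [ProbabilityTheory.cond, Measure.map_smul, hrestrict]

lemma exists_isInvariantMeasure_singleton_ne_zero_of_orbit_finite [MeasurableSingletonClass X]
    {x : X} (hx : (MulAction.orbit G x).Finite) :
    ∃ μ : ProbabilityMeasure X,
      IsInvariantMeasure G (μ : Measure X) ∧ (μ : Measure X) {x} ≠ 0 := by
  have hprob : IsProbabilityMeasure (Measure.count[|MulAction.orbit G x]) :=
    cond_isProbabilityMeasure_of_finite
      (Measure.count_ne_zero_iff.2 ⟨x, MulAction.mem_orbit_self x⟩)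
      (Measure.count_apply_lt_top.2 hx).ne
  refine ⟨⟨_, hprob⟩, isInvariantMeasure_count.cond hx.measurableSet fun g => ?_, ?_⟩
  · rw [preimage_smul, MulAction.smul_orbit]
  · simp [cond_apply hx.measurableSet, Measure.count_apply_lt_top.2 hx |>.ne,
      inter_eq_right.2 (singleton_subset_iff.2 (MulAction.mem_orbit_self x))]

end InvariantMeasures

section ProductActions

variable {G H X Y : Type*} [Group G] [Group H] [MulAction G X] [MulAction H Y]
  [MeasurableSpace X] [MeasurableSpace Y] [MeasurableConstSMul G X]

lemma IsInvariantMeasure.prod_dirac {μ : Measure X} [SFinite μ] (hμ : IsInvariantMeasure G μ)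
    (htriv : ∀ (h : H) (y : Y), h • y = y) (y : Y) (g : G) (h : H) :
    (μ.prod (Measure.dirac y)).map (fun p : X × Y => (g • p.1, h • p.2)) =
      μ.prod (Measure.dirac y) := by
  have hmap : (fun p : X × Y => (g • p.1, h • p.2)) = Prod.map (g • ·) id := by
    funext p
    exact Prod.ext rfl (htriv h p.2)
  rw [hmap, Measure.prod_dirac,
    Measure.map_map ((measurable_const_smul g).prodMap measurable_id) measurable_prodMk_right]
  conv_rhs => rw [← hμ g, Measure.map_map measurable_prodMk_right (measurable_const_smul g)]
  rfl

variable [TopologicalSpace X] [TopologicalSpace Y]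

lemma ProdActionSBP.actionSBP (hprod : ProdActionSBP G H X Y)
    (htriv : ∀ (h : H) (y : Y), h • y = y) (y : Y) : ActionSBP G X := by
  obtain ⟨B, hB, hnull⟩ := hprod
  refine ⟨(preimage fun x => (x, y)) '' B, hB.isInducing (isInducing_prodMkLeft y), ?_⟩
  rintro _ ⟨U, hU, rfl⟩ μ hμ
  have hlift : ((μ : Measure X).prod (Measure.dirac y)) (frontier U) = 0 :=
    hnull U hU ⟨_, inferInstance⟩ (hμ.prod_dirac htriv y)
  rw [Measure.prod_dirac] at hlift
  refine measure_mono_null ((Continuous.prodMk_left y).frontier_preimage_subset U) ?_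
  exact nonpos_iff_eq_zero.1 (hlift ▸ Measure.le_map_apply measurable_prodMk_right.aemeasurable _)

lemma ProdActionSBP.exists_basis_isClopen_slice (hprod : ProdActionSBP G H X Y)
    (htriv : ∀ (h : H) (y : Y), h • y = y) (μ : ProbabilityMeasure X)
    (hμ : IsInvariantMeasure G (μ : Measure X)) {x : X} (hx : (μ : Measure X) {x} ≠ 0) :
    ∃ B : Set (Set (X × Y)),
      IsTopologicalBasis B ∧ ∀ U ∈ B, IsClopen (Prod.mk x ⁻¹' U) := by
  obtain ⟨B, hB, hnull⟩ := hprod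
  refine ⟨B, hB, fun U hU => isClopen_iff_frontier_eq_empty.2 ?_⟩
  refine eq_empty_of_forall_notMem fun y hy => hx ?_
  have hmem : (x, y) ∈ frontier U := (Continuous.prodMk_right x).frontier_preimage_subset U hy
  have hlift : ((μ : Measure X).prod (Measure.dirac y)) (frontier U) = 0 :=
    hnull U hU ⟨_, inferInstance⟩ (hμ.prod_dirac htriv y)
  rw [← mul_one ((μ : Measure X) {x}), ← Measure.dirac_apply_of_mem (mem_singleton y),
    ← Measure.prod_prod, singleton_prod_singleton]
  exact measure_mono_null (singleton_subset_iff.2 hmem) hlift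

end ProductActions

lemma subsingleton_of_isTopologicalBasis_of_isClopen_slice {X Y : Type*} [TopologicalSpace X]
    [TopologicalSpace Y] [PreconnectedSpace Y] [T1Space Y] {B : Set (Set (X × Y))}
    (hB : IsTopologicalBasis B) (x : X) (hslice : ∀ U ∈ B, IsClopen (Prod.mk x ⁻¹' U)) :
    Subsingleton Y := by
  refine ⟨fun a b => by_contra fun hab => ?_⟩
  obtain ⟨U, hU, haU, hUsub⟩ := hB.exists_subset_of_mem_open (a := (x, a))
    (mem_prod.2 ⟨mem_univ x, hab⟩) (isOpen_univ.prod isOpen_compl_singleton)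
  have hb : b ∈ Prod.mk x ⁻¹' U := by
    rw [(hslice U hU).eq_univ ⟨a, haU⟩]
    exact mem_univ b
  exact (hUsub hb).2 rfl

theorem product_sbp_implies_sbp_no_finite_orbits_general {G X : Type*} [Group G]
    [TopologicalSpace X] [TopologicalSpace.MetrizableSpace X]
    [MeasurableSpace X] [BorelSpace X] [MulAction G X] [ContinuousConstSMul G X]
    (hprod : ∀ (H Y : Type*) [Group H] [Countable H]
      [TopologicalSpace Y] [CompactSpace Y] [TopologicalSpace.MetrizableSpace Y]
      [MeasurableSpace Y] [BorelSpace Y] [MulAction H Y] [ContinuousConstSMul H Y],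
      ProdActionSBP G H X Y) :
    ActionSBP G X ∧ ∀ x : X, (MulAction.orbit G x).Infinite := by
  refine ⟨(hprod PUnit PUnit).actionSBP (fun _ _ => rfl) PUnit.unit, fun x hfin => ?_⟩
  have : PreconnectedSpace (ULift unitInterval) :=
    ULift.up_surjective.denseRange.preconnectedSpace continuous_uliftUp
  obtain ⟨μ, hμ, hx⟩ := exists_isInvariantMeasure_singleton_ne_zero_of_orbit_finite hfin
  obtain ⟨B, hB, hslice⟩ := (hprod PUnit (ULift unitInterval)).exists_basis_isClopen_slice
    (fun _ _ => rfl) μ hμ hx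
  exact not_subsingleton _ (subsingleton_of_isTopologicalBasis_of_isClopen_slice hB x hslice)

theorem product_sbp_implies_sbp_no_finite_orbits {G X : Type*} [Group G] [Countable G]
    [TopologicalSpace X] [CompactSpace X] [TopologicalSpace.MetrizableSpace X]
    [MeasurableSpace X] [BorelSpace X] [MulAction G X] [ContinuousConstSMul G X]
    (hprod : ∀ (H Y : Type*) [Group H] [Countable H]
      [TopologicalSpace Y] [CompactSpace Y] [TopologicalSpace.MetrizableSpace Y]
      [MeasurableSpace Y] [BorelSpace Y] [MulAction H Y] [ContinuousConstSMul H Y],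
      ProdActionSBP G H X Y) :
    ActionSBP G X ∧ ∀ x : X, (MulAction.orbit G x).Infinite :=
  product_sbp_implies_sbp_no_finite_orbits_general hprod
end

section
/- Let G be a countable group acting continuously on a compact metrizable space X. Define SBP₂(X) to be the set of pairs (x₁, x₂) ∈ X² with x₁ ≠ x₂ such that there is no open neighbourhood U of x₁ with x₂ ∉ closure(U) and μ(∂U) = 0 for all G-invariant Borel probability measures μ. Then the action G ↪ X has the small boundary property if and only if SBP₂(X) = ∅. -/
open MeasureTheory Topology

/-- The set of SBP pairs: pairs of distinct points `(x₁, x₂)` such that there is no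
open neighbourhood `U` of `x₁` with `x₂ ∉ closure U` whose boundary is null for every
`G`-invariant Borel probability measure. -/
def SBP2 (G : Type*) (X : Type*) [Group G] [MulAction G X] [TopologicalSpace X]
    [MeasurableSpace X] : Set (X × X) :=
  {p | p.1 ≠ p.2 ∧
    ¬∃ U : Set X, IsOpen U ∧ p.1 ∈ U ∧ p.2 ∉ closure U ∧
      ∀ μ : ProbabilityMeasure X, IsInvariantMeasure G (μ : Measure X) →
        (μ : Measure X) (frontier U) = 0}

namespace TopologicalSpace

variable {X : Type*} [TopologicalSpace X]

theorem IsTopologicalBasis.exists_mem_notMem_closure [T2Space X] {B : Set (Set X)}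
    (hB : IsTopologicalBasis B) {x y : X} (hxy : x ≠ y) :
    ∃ U ∈ B, x ∈ U ∧ y ∉ closure U := by
  obtain ⟨V₁, V₂, hV₁, hV₂, hxV₁, hyV₂, hdisj⟩ := t2_separation hxy
  obtain ⟨U, hUB, hxU, hUV₁⟩ := hB.exists_subset_of_mem_open hxV₁ hV₁
  have hclosure : closure U ⊆ V₂ᶜ :=
    closure_minimal (hUV₁.trans hdisj.subset_compl_right) hV₂.isClosed_compl
  exact ⟨U, hUB, hxU, fun hy => hclosure hy hyV₂⟩

/-- In a compact space, the closures of the members of `S` containing `x` form a directed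
family of closed sets whose intersection is `{x}`, so one of them lies in any neighbourhood
of `x`. -/
theorem isTopologicalBasis_of_separating [CompactSpace X] {S : Set (Set X)}
    (hopen : ∀ U ∈ S, IsOpen U) (huniv : Set.univ ∈ S) (hinter : InfClosed S)
    (hsep : ∀ x y : X, x ≠ y → ∃ U ∈ S, x ∈ U ∧ y ∉ closure U) :
    IsTopologicalBasis S := by
  refine isTopologicalBasis_of_isOpen_of_nhds hopen fun x W hxW hW => ?_
  let nbhds := {U : Set X // U ∈ S ∧ x ∈ U}
  have : Nonempty nbhds := ⟨⟨Set.univ, huniv, Set.mem_univ x⟩⟩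
  have hdirected : Directed (· ⊇ ·) fun U : nbhds => closure U.1 := fun U V =>
    ⟨⟨U.1 ∩ V.1, hinter U.2.1 V.2.1, U.2.2, V.2.2⟩,
      closure_mono Set.inter_subset_left, closure_mono Set.inter_subset_right⟩
  have hcap : ∀ y ∈ ⋂ U : nbhds, closure U.1, W ∈ 𝓝 y := by
    intro y hy
    obtain rfl : y = x := by
      by_contra hyx
      obtain ⟨U, hUS, hxU, hyU⟩ := hsep x y (Ne.symm hyx)
      exact hyU (Set.mem_iInter.mp hy ⟨U, hUS, hxU⟩)
    exact hW.mem_nhds hxW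
  obtain ⟨U, hUW⟩ := exists_subset_nhds_of_compactSpace hdirected (fun _ => isClosed_closure) hcap
  exact ⟨U.1, U.2.1, U.2.2, subset_closure.trans hUW⟩

end TopologicalSpace

section SmallBoundary

variable (G X : Type*) [Group G] [MulAction G X] [TopologicalSpace X] [MeasurableSpace X]

def smallBoundaryOpens : Set (Set X) :=
  {U | IsOpen U ∧ ∀ μ : ProbabilityMeasure X, IsInvariantMeasure G (μ : Measure X) →
    (μ : Measure X) (frontier U) = 0}

theorem univ_mem_smallBoundaryOpens : Set.univ ∈ smallBoundaryOpens G X :=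
  ⟨isOpen_univ, fun μ _ => by rw [frontier_univ, measure_empty]⟩

theorem infClosed_smallBoundaryOpens : InfClosed (smallBoundaryOpens G X) :=
  fun _ ⟨hUo, hU⟩ _ ⟨hVo, hV⟩ => ⟨hUo.inter hVo, fun μ hμ =>
    measure_mono_null (frontier_inter_subset _ _)
      (measure_union_null (measure_mono_null Set.inter_subset_left (hU μ hμ))
        (measure_mono_null Set.inter_subset_right (hV μ hμ)))⟩

theorem actionSBP_iff_isTopologicalBasis :
    ActionSBP G X ↔ TopologicalSpace.IsTopologicalBasis (smallBoundaryOpens G X) := by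
  refine ⟨fun ⟨B, hB, hnull⟩ => ?_, fun h => ⟨_, h, fun _ hU => hU.2⟩⟩
  exact hB.of_isOpen_of_subset (fun _ hU => hU.1) fun U hU => ⟨hB.isOpen hU, hnull U hU⟩

theorem sbp2_eq_empty_iff : SBP2 G X = ∅ ↔
    ∀ x y : X, x ≠ y → ∃ U ∈ smallBoundaryOpens G X, x ∈ U ∧ y ∉ closure U := by
  simp only [Set.eq_empty_iff_forall_notMem, SBP2, Prod.forall, Set.mem_ofPred_eq, not_and,
    not_not]
  refine forall₂_congr fun x y => imp_congr_right fun _ => ?_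
  exact ⟨fun ⟨U, hUo, hxU, hyU, hU⟩ => ⟨U, ⟨hUo, hU⟩, hxU, hyU⟩,
    fun ⟨U, ⟨hUo, hU⟩, hxU, hyU⟩ => ⟨U, hUo, hxU, hyU, hU⟩⟩

end SmallBoundary

theorem sbp_iff_no_sbp_pairs_general {G X : Type*} [Group G]
    [TopologicalSpace X] [CompactSpace X] [TopologicalSpace.MetrizableSpace X]
    [MeasurableSpace X] [MulAction G X] :
    ActionSBP G X ↔ SBP2 G X = ∅ := by
  rw [actionSBP_iff_isTopologicalBasis, sbp2_eq_empty_iff]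
  exact ⟨fun hB _ _ hxy => hB.exists_mem_notMem_closure hxy,
    TopologicalSpace.isTopologicalBasis_of_separating (fun _ hU => hU.1)
      (univ_mem_smallBoundaryOpens G X) (infClosed_smallBoundaryOpens G X)⟩

theorem sbp_iff_no_sbp_pairs {G X : Type*} [Group G] [Countable G]
    [TopologicalSpace X] [CompactSpace X] [TopologicalSpace.MetrizableSpace X]
    [MeasurableSpace X] [BorelSpace X] [MulAction G X] [ContinuousConstSMul G X] :
    ActionSBP G X ↔ SBP2 G X = ∅ :=
  sbp_iff_no_sbp_pairs_general
end

section
/- Let G be a countable group acting continuously on a compact metrizable space X, and let A₁, A₂ be disjoint closed subsets of X that are not separated by closed M_G(X)-small sets (i.e., there is no partition {U₁, Y, U₂} of X with U₁, U₂ open, A₁ ⊆ U₁, A₂ ⊆ U₂, and Y null for every G-invariant Borel probability measure). Then (A₁ × A₂) ∩ SBP₂(X) ≠ ∅. -/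
open MeasureTheory Topology

section Aux

variable (G : Type*) {X : Type*} [Group G] [MulAction G X]

/-- `B₁` and `B₂` can be separated by an open set with small boundary. -/
def MySep [TopologicalSpace X] [MeasurableSpace X] (B₁ B₂ : Set X) : Prop :=
  ∃ U : Set X, IsOpen U ∧ B₁ ⊆ U ∧ Disjoint B₂ (closure U) ∧
    ∀ μ : ProbabilityMeasure X, IsInvariantMeasure G (μ : Measure X) →
      (μ : Measure X) (frontier U) = 0

variable [TopologicalSpace X] [MeasurableSpace X]

theorem mySep_empty_left (B₂ : Set X) : MySep G ∅ B₂ :=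
  ⟨∅, isOpen_empty, Set.Subset.rfl, by simp, by simp⟩

theorem mySep_empty_right (B₁ : Set X) : MySep G B₁ ∅ :=
  ⟨Set.univ, isOpen_univ, Set.subset_univ _, by simp, by simp⟩

theorem mySep_mono {B₁ B₂ C₁ C₂ : Set X} (h : MySep G B₁ B₂) (h₁ : C₁ ⊆ B₁)
    (h₂ : C₂ ⊆ B₂) : MySep G C₁ C₂ := by
  obtain ⟨U, hU, hB₁, hdis, hsm⟩ := h
  exact ⟨U, hU, h₁.trans hB₁, (Set.disjoint_of_subset_left h₂ hdis), hsm⟩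

theorem mySep_symm {B₁ B₂ : Set X} (h : MySep G B₁ B₂) : MySep G B₂ B₁ := by
  obtain ⟨U, hU, hB₁, hdis, hsm⟩ := h
  refine ⟨(closure U)ᶜ, isClosed_closure.isOpen_compl, ?_, ?_, ?_⟩
  · rwa [Set.subset_compl_iff_disjoint_right]
  · have h1 : closure (closure U)ᶜ = (interior (closure U))ᶜ := closure_compl
    rw [h1]
    exact disjoint_compl_right.mono_left (hB₁.trans (interior_maximal subset_closure hU))
  · intro μ hμ
    refine measure_mono_null ?_ (hsm μ hμ)
    calc frontier (closure U)ᶜ = frontier (closure U) := frontier_compl _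
      _ ⊆ frontier U := frontier_closure_subset

theorem mySep_union_left {B₁ B₁' B₂ : Set X} (h : MySep G B₁ B₂)
    (h' : MySep G B₁' B₂) : MySep G (B₁ ∪ B₁') B₂ := by
  obtain ⟨U, hU, hB₁, hdis, hsm⟩ := h
  obtain ⟨V, hV, hB₁', hdis', hsm'⟩ := h'
  refine ⟨U ∪ V, hU.union hV, Set.union_subset_union hB₁ hB₁', ?_, ?_⟩
  · rw [closure_union]
    exact Set.disjoint_union_right.2 ⟨hdis, hdis'⟩
  · intro μ hμ
    refine measure_mono_null ((frontier_union_subset U V).trans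
      (Set.union_subset_union Set.inter_subset_left Set.inter_subset_right)) ?_
    exact measure_union_null (hsm μ hμ) (hsm' μ hμ)

theorem mySep_biUnion {ι : Type*} {B₂ : Set X} (t : Finset ι) (f : ι → Set X)
    (h : ∀ i ∈ t, MySep G (f i) B₂) : MySep G (⋃ i ∈ t, f i) B₂ := by
  classical
  revert h
  induction t using Finset.induction_on with
  | empty => intro _; simpa using mySep_empty_left G B₂
  | @insert a s _ ih =>
    intro h
    rw [Finset.set_biUnion_insert]
    exact mySep_union_left G (h a (Finset.mem_insert_self a s))
      (ih fun i hi => h i (Finset.mem_insert_of_mem hi))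

theorem mySep_nonempty_left {B₁ B₂ : Set X} (h : ¬ MySep G B₁ B₂) :
    B₁.Nonempty := by
  rcases Set.eq_empty_or_nonempty B₁ with rfl | h'
  · exact absurd (mySep_empty_left G B₂) h
  · exact h'

theorem mySep_nonempty_right {B₁ B₂ : Set X} (h : ¬ MySep G B₁ B₂) :
    B₂.Nonempty := by
  rcases Set.eq_empty_or_nonempty B₂ with rfl | h'
  · exact absurd (mySep_empty_right G B₁) h
  · exact h'

end Aux

section MetricAux

variable (G : Type*) {X : Type*} [Group G] [MulAction G X]
variable [MetricSpace X] [CompactSpace X] [MeasurableSpace X]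

/-- Shrink the first set in a non-separated pair to one of diameter at most `ε`. -/
theorem mySep_half_step {B₁ B₂ : Set X} (h₁ : IsClosed B₁)
    (h : ¬ MySep G B₁ B₂) {ε : ℝ} (hε : 0 < ε) :
    ∃ C₁ : Set X, IsClosed C₁ ∧ C₁ ⊆ B₁ ∧ Metric.diam C₁ ≤ ε ∧ ¬ MySep G C₁ B₂ := by
  have hcomp : IsCompact B₁ := h₁.isCompact
  have hcover : B₁ ⊆ ⋃ x : X, Metric.ball x (ε / 3) := by
    intro y _
    exact Set.mem_iUnion.2 ⟨y, Metric.mem_ball_self (by linarith)⟩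
  obtain ⟨t, ht⟩ := hcomp.elim_finite_subcover (fun x : X => Metric.ball x (ε / 3))
    (fun x => Metric.isOpen_ball) hcover
  by_contra hcon
  push_neg at hcon
  have hall : ∀ x ∈ t, MySep G (B₁ ∩ Metric.closedBall x (ε / 3)) B₂ := by
    intro x _
    have hC : IsClosed (B₁ ∩ Metric.closedBall x (ε / 3)) :=
      h₁.inter Metric.isClosed_closedBall
    have hd : Metric.diam (B₁ ∩ Metric.closedBall x (ε / 3)) ≤ ε := by
      calc Metric.diam (B₁ ∩ Metric.closedBall x (ε / 3))
          ≤ Metric.diam (Metric.closedBall x (ε / 3)) :=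
            Metric.diam_mono Set.inter_subset_right Metric.isBounded_closedBall
        _ ≤ 2 * (ε / 3) := Metric.diam_closedBall (by linarith)
        _ ≤ ε := by linarith
    exact hcon _ hC Set.inter_subset_left hd
  have := mySep_biUnion G t (fun x => B₁ ∩ Metric.closedBall x (ε / 3)) hall
  refine h (mySep_mono G this ?_ Set.Subset.rfl)
  intro y hy
  obtain ⟨x, hxt, hxy⟩ := Set.mem_iUnion₂.1 (ht hy)
  exact Set.mem_iUnion₂.2 ⟨x, hxt, hy, Metric.ball_subset_closedBall hxy⟩

theorem mySep_step {B₁ B₂ : Set X} (h₁ : IsClosed B₁) (h₂ : IsClosed B₂)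
    (h : ¬ MySep G B₁ B₂) {ε : ℝ} (hε : 0 < ε) :
    ∃ C₁ C₂ : Set X, IsClosed C₁ ∧ IsClosed C₂ ∧ C₁ ⊆ B₁ ∧ C₂ ⊆ B₂ ∧
      Metric.diam C₁ ≤ ε ∧ Metric.diam C₂ ≤ ε ∧ ¬ MySep G C₁ C₂ := by
  obtain ⟨C₁, hC₁, hC₁B, hC₁d, hC₁sep⟩ := mySep_half_step G h₁ h hε
  have h' : ¬ MySep G B₂ C₁ := fun hs => hC₁sep (mySep_symm G hs)
  obtain ⟨C₂, hC₂, hC₂B, hC₂d, hC₂sep⟩ := mySep_half_step G h₂ h' hε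
  exact ⟨C₁, C₂, hC₁, hC₂, hC₁B, hC₂B, hC₁d, hC₂d,
    fun hs => hC₂sep (mySep_symm G hs)⟩

end MetricAux

theorem not_separated_implies_sbp_pair {G X : Type*} [Group G] [Countable G]
    [TopologicalSpace X] [CompactSpace X] [TopologicalSpace.MetrizableSpace X]
    [MeasurableSpace X] [BorelSpace X] [MulAction G X] [ContinuousConstSMul G X]
    (A₁ A₂ : Set X) (hA₁ : IsClosed A₁) (hA₂ : IsClosed A₂) (hdisj : Disjoint A₁ A₂)
    (hnosep : ¬∃ U₁ U₂ Z : Set X, IsOpen U₁ ∧ IsOpen U₂ ∧ A₁ ⊆ U₁ ∧ A₂ ⊆ U₂ ∧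
      Disjoint U₁ U₂ ∧ Disjoint U₁ Z ∧ Disjoint U₂ Z ∧ U₁ ∪ Z ∪ U₂ = Set.univ ∧
      ∀ μ : ProbabilityMeasure X, IsInvariantMeasure G (μ : Measure X) →
        (μ : Measure X) Z = 0) :
    ((A₁ ×ˢ A₂) ∩ SBP2 G X).Nonempty := by
  letI : MetricSpace X := TopologicalSpace.metrizableSpaceMetric X
  -- Step 0: `A₁` and `A₂` are not separated.
  have hAsep : ¬ MySep G A₁ A₂ := by
    rintro ⟨U, hU, hA₁U, hdis, hsm⟩
    refine hnosep ⟨U, (closure U)ᶜ, frontier U, hU, isClosed_closure.isOpen_compl,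
      hA₁U, Set.subset_compl_iff_disjoint_right.2 hdis, ?_, ?_, ?_, ?_, hsm⟩
    · exact disjoint_compl_right.mono_left subset_closure
    · exact (disjoint_frontier_iff_isOpen.2 hU).symm
    · exact disjoint_compl_left.mono_right frontier_subset_closure
    · rw [← closure_eq_self_union_frontier, Set.union_compl_self]
  -- choice function for the bisection step
  have step : ∀ n : ℕ, ∀ B₁ B₂ : Set X, IsClosed B₁ → IsClosed B₂ → ¬ MySep G B₁ B₂ →
      ∃ C : Set X × Set X, IsClosed C.1 ∧ IsClosed C.2 ∧ C.1 ⊆ B₁ ∧ C.2 ⊆ B₂ ∧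
        Metric.diam C.1 ≤ ((n : ℝ) + 1)⁻¹ ∧ Metric.diam C.2 ≤ ((n : ℝ) + 1)⁻¹ ∧
        ¬ MySep G C.1 C.2 := by
    intro n B₁ B₂ h₁ h₂ h
    obtain ⟨C₁, C₂, hc₁, hc₂, hs₁, hs₂, hd₁, hd₂, hns⟩ :=
      mySep_step G h₁ h₂ h (ε := ((n : ℝ) + 1)⁻¹) (by positivity)
    exact ⟨(C₁, C₂), hc₁, hc₂, hs₁, hs₂, hd₁, hd₂, hns⟩
  choose! F hF using step
  -- the nested sequence of pairs
  set S : ℕ → Set X × Set X :=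
    fun n => Nat.rec (A₁, A₂) (fun n p => F n p.1 p.2) n with hSdef
  have hSsucc : ∀ n, S (n + 1) = F n (S n).1 (S n).2 := fun n => rfl
  have hS : ∀ n, IsClosed (S n).1 ∧ IsClosed (S n).2 ∧ ¬ MySep G (S n).1 (S n).2 := by
    intro n
    induction n with
    | zero => exact ⟨hA₁, hA₂, hAsep⟩
    | succ n ih =>
      have h := hF n (S n).1 (S n).2 ih.1 ih.2.1 ih.2.2
      rw [hSsucc n]
      exact ⟨h.1, h.2.1, h.2.2.2.2.2.2⟩
  have hstep : ∀ n, (S (n + 1)).1 ⊆ (S n).1 ∧ (S (n + 1)).2 ⊆ (S n).2 ∧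
      Metric.diam (S (n + 1)).1 ≤ ((n : ℝ) + 1)⁻¹ ∧
      Metric.diam (S (n + 1)).2 ≤ ((n : ℝ) + 1)⁻¹ := by
    intro n
    have h := hF n (S n).1 (S n).2 (hS n).1 (hS n).2.1 (hS n).2.2
    rw [hSsucc n]
    exact ⟨h.2.2.1, h.2.2.2.1, h.2.2.2.2.1, h.2.2.2.2.2.1⟩
  -- the intersection points
  obtain ⟨x₁, hx₁⟩ := IsCompact.nonempty_iInter_of_sequence_nonempty_isCompact_isClosed
    (fun n => (S n).1) (fun n => (hstep n).1)
    (fun n => mySep_nonempty_left G (hS n).2.2)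
    (hS 0).1.isCompact (fun n => (hS n).1)
  obtain ⟨x₂, hx₂⟩ := IsCompact.nonempty_iInter_of_sequence_nonempty_isCompact_isClosed
    (fun n => (S n).2) (fun n => (hstep n).2.1)
    (fun n => mySep_nonempty_right G (hS n).2.2)
    (hS 0).2.1.isCompact (fun n => (hS n).2.1)
  have hx₁n : ∀ n, x₁ ∈ (S n).1 := fun n => Set.mem_iInter.1 hx₁ n
  have hx₂n : ∀ n, x₂ ∈ (S n).2 := fun n => Set.mem_iInter.1 hx₂ n
  have hx₁A : x₁ ∈ A₁ := hx₁n 0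
  have hx₂A : x₂ ∈ A₂ := hx₂n 0
  refine ⟨(x₁, x₂), ⟨hx₁A, hx₂A⟩, ?_, ?_⟩
  · intro h
    have h' : x₁ = x₂ := h
    exact Set.disjoint_left.1 hdisj hx₁A (h' ▸ hx₂A)
  · rintro ⟨U, hU, hxU, hxC, hsm⟩
    have hV : IsOpen (closure U)ᶜ := isClosed_closure.isOpen_compl
    obtain ⟨δ₁, hδ₁, hball₁⟩ := Metric.isOpen_iff.1 hU x₁ hxU
    obtain ⟨δ₂, hδ₂, hball₂⟩ := Metric.isOpen_iff.1 hV x₂ hxC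
    obtain ⟨n, hn⟩ := exists_nat_one_div_lt (lt_min hδ₁ hδ₂)
    have hn' : ((n : ℝ) + 1)⁻¹ < min δ₁ δ₂ := by rwa [one_div] at hn
    refine (hS (n + 1)).2.2 ⟨U, hU, ?_, ?_, hsm⟩
    · intro y hy
      refine hball₁ ?_
      have hd := Metric.dist_le_diam_of_mem (hS (n + 1)).1.isCompact.isBounded hy
        (hx₁n (n + 1))
      have := (hstep n).2.2.1
      simp only [Metric.mem_ball]
      calc dist y x₁ ≤ Metric.diam (S (n + 1)).1 := hd
        _ ≤ ((n : ℝ) + 1)⁻¹ := this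
        _ < δ₁ := lt_of_lt_of_le hn' (min_le_left _ _)
    · rw [← Set.subset_compl_iff_disjoint_right]
      intro y hy
      refine hball₂ ?_
      have hd := Metric.dist_le_diam_of_mem (hS (n + 1)).2.1.isCompact.isBounded hy
        (hx₂n (n + 1))
      simp only [Metric.mem_ball]
      calc dist y x₂ ≤ Metric.diam (S (n + 1)).2 := hd
        _ ≤ ((n : ℝ) + 1)⁻¹ := (hstep n).2.2.2
        _ < δ₂ := lt_of_lt_of_le hn' (min_le_right _ _)
end
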